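/- arXiv:0909.0073 — 4 statements merged into one kernel-verified Lean document; each statement's English description precedes it below -/
import Mathlib

section
/- Let I be the toric ideal of the simplified no-reciprocation design matrix Z̃ₙ, in variables p_{ij}(1,0), p_{ij}(0,1), p_{ij}(1,1) for i < j. Then I = I_{Aₙ} + T, where I_{Aₙ} is the toric ideal of the incidence matrix of Gₙ in the variables p_{ij}(1,0), p_{ij}(0,1), and T is the ideal generated by the binomials p_{ij}(0,1)·p_{ij}(1,0) − p_{ij}(1,1) for all i < j. -/
open MvPolynomial

/-- Dyads: ordered pairs (i,j) with i < j. -/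
def Dy (n : ℕ) : Type := {p : Fin n × Fin n // p.1 < p.2}

instance (n : ℕ) : Fintype (Dy n) := by unfold Dy; infer_instance
instance (n : ℕ) : DecidableEq (Dy n) := by unfold Dy; infer_instance

/-- `a` exponent of the dyad state: 0 ↦ (1,0), 1 ↦ (0,1), 2 ↦ (1,1). -/
def aOf (k : Fin 3) : ℤ := if k = 1 then 0 else 1

/-- `b` exponent of the dyad state. -/
def bOf (k : Fin 3) : ℤ := if k = 0 then 0 else 1

/-- The binomial p^{u⁺} − p^{u⁻} associated to an integer vector u. -/
noncomputable def binom {σ : Type*} [Fintype σ] (u : σ → ℤ) : MvPolynomial σ ℚ :=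
  (∏ c, X c ^ (u c).toNat) - ∏ c, X c ^ (-u c).toNat

/-- The toric ideal of an integer matrix M: the ideal generated by all binomials
p^{u⁺} − p^{u⁻} with u ∈ ker M. -/
noncomputable def toricIdeal {ρ σ : Type*} [Fintype ρ] [Fintype σ]
    (M : Matrix ρ σ ℤ) : Ideal (MvPolynomial σ ℚ) :=
  Ideal.span {f | ∃ u : σ → ℤ, M.mulVec u = 0 ∧ f = binom u}

/-- Design matrix Z̃ₙ of the simplified p₁ model with no reciprocation: rows indexed by
α₁,…,αₙ, β₁,…,βₙ, θ; columns by p_{ij}(1,0), p_{ij}(0,1), p_{ij}(1,1) for i < j. -/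
def Ztilde (n : ℕ) : Matrix (Fin n ⊕ Fin n ⊕ Unit) (Dy n × Fin 3) ℤ :=
  fun r c =>
    match r with
    | Sum.inl t =>
        aOf c.2 * (if t = c.1.1.1 then 1 else 0) + bOf c.2 * (if t = c.1.1.2 then 1 else 0)
    | Sum.inr (Sum.inl t) =>
        aOf c.2 * (if t = c.1.1.2 then 1 else 0) + bOf c.2 * (if t = c.1.1.1 then 1 else 0)
    | Sum.inr (Sum.inr _) => aOf c.2 + bOf c.2

/-- Incidence matrix of the bipartite graph Gₙ, with columns indexed by the variables
of the simplified model: the variable p_{ij}(1,0) corresponds to the edge (α_i, β_j),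
p_{ij}(0,1) to the edge (α_j, β_i), and the p_{ij}(1,1)-columns are zero. -/
def AGv (n : ℕ) : Matrix (Fin n ⊕ Fin n) (Dy n × Fin 3) ℤ :=
  fun r c =>
    match r with
    | Sum.inl t =>
        if c.2 = 0 then (if t = c.1.1.1 then 1 else 0)
        else if c.2 = 1 then (if t = c.1.1.2 then 1 else 0) else 0
    | Sum.inr t =>
        if c.2 = 0 then (if t = c.1.1.2 then 1 else 0)
        else if c.2 = 1 then (if t = c.1.1.1 then 1 else 0) else 0


/-! Substituting `p_{ij}(1,1) ↦ p_{ij}(1,0) p_{ij}(0,1)` changes a polynomial only modulo `T`,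
and sends the binomial of a kernel vector `u` of `Z̃ₙ` to a monomial times the binomial of the
vector obtained from `u` by adding each `(1,1)`-entry to the `(1,0)`- and `(0,1)`-entries of the
same dyad. As the `(1,1)`-column of `Z̃ₙ` is the sum of the other two, that vector is still in the
kernel of `Z̃ₙ`, hence in that of `Aₙ`, whose rows agree with the `α`- and `β`-rows of `Z̃ₙ` off the
`(1,1)`-columns. Conversely, the `θ`-row of `Z̃ₙ` is the sum of its `α`-rows, so kernel vectors
of `Aₙ` without `(1,1)`-entries are kernel vectors of `Z̃ₙ`. -/

open scoped Matrix

section Monomials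

variable {R σ : Type*} [CommSemiring R] [Fintype σ]

noncomputable def xPow (w : σ → ℕ) : MvPolynomial σ R :=
  ∏ c, X c ^ w c

lemma xPow_add (a b : σ → ℕ) : (xPow (a + b) : MvPolynomial σ R) = xPow a * xPow b := by
  simp only [xPow, Pi.add_apply, pow_add, Finset.prod_mul_distrib]

@[simp]
lemma xPow_zero : (xPow 0 : MvPolynomial σ R) = 1 := by
  simp [xPow]

lemma xPow_single [DecidableEq σ] (c : σ) :
    (xPow (Pi.single c 1) : MvPolynomial σ R) = X c := by
  simp [xPow, Pi.single_apply, pow_ite]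

end Monomials

lemma xPow_sub_xPow {σ : Type*} [Fintype σ] (a b : σ → ℕ) :
    (xPow a - xPow b : MvPolynomial σ ℚ) = xPow (a ⊓ b) * binom (fun c => (a c : ℤ) - b c) := by
  have ha : a = a ⊓ b + fun c => ((a c : ℤ) - b c).toNat := by
    funext c; simp only [Pi.add_apply, Pi.inf_apply]; omega
  have hb : b = a ⊓ b + fun c => (-((a c : ℤ) - b c)).toNat := by
    funext c; simp only [Pi.add_apply, Pi.inf_apply]; omega
  rw [binom, mul_sub]
  change _ = xPow _ * xPow _ - xPow _ * xPow _
  rw [← xPow_add, ← xPow_add, ← ha, ← hb]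

lemma sub_aeval_mem_span_X_sub {R σ : Type*} [CommRing R] (g : σ → MvPolynomial σ R)
    (f : MvPolynomial σ R) : f - aeval g f ∈ Ideal.span (Set.range fun c => X c - g c) := by
  induction f using MvPolynomial.induction_on with
  | C a => simp [MvPolynomial.algebraMap_eq]
  | add p q hp hq =>
    rw [map_add, add_sub_add_comm]
    exact Ideal.add_mem _ hp hq
  | mul_X p i hp =>
    have h : p * X i - aeval g (p * X i) = (p - aeval g p) * X i + aeval g p * (X i - g i) := by
      rw [map_mul, aeval_X]; ring
    rw [h]
    exact Ideal.add_mem _ (Ideal.mul_mem_right _ _ hp)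
      (Ideal.mul_mem_left _ _ (Ideal.subset_span ⟨i, rfl⟩))

section Merge

variable {ι : Type*}

def mergeExp {M : Type*} [AddCommMonoid M] (u : ι × Fin 3 → M) : ι × Fin 3 → M :=
  fun c => ![u (c.1, 0) + u (c.1, 2), u (c.1, 1) + u (c.1, 2), 0] c.2

@[simp]
lemma mergeExp_two {M : Type*} [AddCommMonoid M] (u : ι × Fin 3 → M) (e : ι) :
    mergeExp u (e, 2) = 0 := rfl

lemma mergeExp_toNat_sub_toNat_neg (u : ι × Fin 3 → ℤ) :
    (fun c => ((mergeExp (fun c => (u c).toNat) c : ℕ) : ℤ)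
      - mergeExp (fun c => (-u c).toNat) c) = mergeExp u := by
  funext ⟨e, k⟩
  fin_cases k <;> simp [mergeExp] <;> omega

noncomputable def mergeSubst (R : Type*) [CommSemiring R] (c : ι × Fin 3) :
    MvPolynomial (ι × Fin 3) R :=
  if c.2 = 2 then X (c.1, 0) * X (c.1, 1) else X c

lemma aeval_mergeSubst_xPow {R : Type*} [CommSemiring R] [Fintype ι] (w : ι × Fin 3 → ℕ) :
    aeval (mergeSubst R) (xPow w : MvPolynomial _ R) = xPow (mergeExp w) := by
  simp only [xPow, map_prod, Fintype.prod_prod_type, Fin.prod_univ_three]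
  refine Finset.prod_congr rfl fun e _ => ?_
  simp [mergeSubst, mergeExp]
  ring

lemma aeval_mergeSubst_binom [Fintype ι] (u : ι × Fin 3 → ℤ) :
    aeval (mergeSubst ℚ) (binom u)
      = xPow (mergeExp (fun c => (u c).toNat) ⊓ mergeExp (fun c => (-u c).toNat))
        * binom (mergeExp u) := by
  rw [binom, map_sub]
  change aeval _ (xPow _) - aeval _ (xPow _) = _
  rw [aeval_mergeSubst_xPow, aeval_mergeSubst_xPow, xPow_sub_xPow,
    mergeExp_toNat_sub_toNat_neg]

lemma sub_aeval_mergeSubst_mem {R : Type*} [CommRing R] (f : MvPolynomial (ι × Fin 3) R) :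
    f - aeval (mergeSubst R) f ∈
      Ideal.span {f | ∃ e : ι,
        f = X (e, (1 : Fin 3)) * X (e, (0 : Fin 3)) - X (e, (2 : Fin 3))} := by
  refine Ideal.span_le.2 ?_ (sub_aeval_mem_span_X_sub _ f)
  rintro _ ⟨⟨e, k⟩, rfl⟩
  fin_cases k
  · simp [mergeSubst]
  · simp [mergeSubst]
  · rw [SetLike.mem_coe, ← neg_mem_iff, neg_sub]
    simp only [mergeSubst]
    rw [mul_comm]
    exact Ideal.subset_span ⟨e, rfl⟩

lemma mulVec_mergeExp {ρ R : Type*} [CommSemiring R] [Fintype ι] (M : Matrix ρ (ι × Fin 3) R)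
    (hM : ∀ r e, M r (e, 2) = M r (e, 0) + M r (e, 1)) (u : ι × Fin 3 → R) :
    M *ᵥ mergeExp u = M *ᵥ u := by
  funext r
  simp only [Matrix.mulVec, dotProduct, Fintype.sum_prod_type, Fin.sum_univ_three, hM]
  refine Finset.sum_congr rfl fun e _ => ?_
  simp [mergeExp]
  ring

end Merge

section DesignMatrix

variable {n : ℕ}

lemma Ztilde_col_two (r : Fin n ⊕ Fin n ⊕ Unit) (e : Dy n) :
    Ztilde n r (e, 2) = Ztilde n r (e, 0) + Ztilde n r (e, 1) := by
  rcases r with t | t | t <;> simp [Ztilde, aOf, bOf]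

lemma Ztilde_theta_row (c : Dy n × Fin 3) :
    Ztilde n (Sum.inr (Sum.inr ())) c = ∑ t, Ztilde n (Sum.inl t) c := by
  simp [Ztilde, Finset.sum_add_distrib]

lemma mulVec_Ztilde_theta (v : Dy n × Fin 3 → ℤ) :
    (Ztilde n *ᵥ v) (Sum.inr (Sum.inr ())) = ∑ t, (Ztilde n *ᵥ v) (Sum.inl t) := by
  simp only [Matrix.mulVec, dotProduct, Ztilde_theta_row, Finset.sum_mul]
  exact Finset.sum_comm

lemma mulVec_AGv_eq (v : Dy n × Fin 3 → ℤ) (hv : ∀ e, v (e, 2) = 0) :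
    AGv n *ᵥ v = (Ztilde n *ᵥ v) ∘ Sum.map id Sum.inl := by
  funext r
  simp only [Matrix.mulVec, dotProduct, Function.comp_apply]
  refine Finset.sum_congr rfl fun ⟨e, k⟩ _ => ?_
  rcases r with t | t <;> fin_cases k <;> simp [AGv, Ztilde, aOf, bOf, hv]

lemma Ztilde_mulVec_eq_zero (v : Dy n × Fin 3 → ℤ) (hv : AGv n *ᵥ v = 0)
    (hv2 : ∀ e, v (e, 2) = 0) : Ztilde n *ᵥ v = 0 := by
  have hrows (r : Fin n ⊕ Fin n) : (Ztilde n *ᵥ v) (Sum.map id Sum.inl r) = 0 := by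
    rw [← Function.comp_apply (f := Ztilde n *ᵥ v), ← mulVec_AGv_eq v hv2, hv, Pi.zero_apply]
  funext r
  rcases r with t | t | ⟨⟩
  · exact hrows (Sum.inl t)
  · exact hrows (Sum.inr t)
  · rw [mulVec_Ztilde_theta, Pi.zero_apply]
    exact Finset.sum_eq_zero fun t _ => hrows (Sum.inl t)

lemma AGv_mulVec_mergeExp (u : Dy n × Fin 3 → ℤ) (hu : Ztilde n *ᵥ u = 0) :
    AGv n *ᵥ mergeExp u = 0 := by
  rw [mulVec_AGv_eq _ (mergeExp_two u), mulVec_mergeExp _ Ztilde_col_two, hu]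
  rfl

def mixedMove (e : Dy n) : Dy n × Fin 3 → ℤ :=
  Pi.single (e, 0) 1 + Pi.single (e, 1) 1 - Pi.single (e, 2) 1

lemma Ztilde_mulVec_mixedMove (e : Dy n) : Ztilde n *ᵥ mixedMove e = 0 := by
  funext r
  simp [mixedMove, Matrix.mulVec_add, Matrix.mulVec_sub, Ztilde_col_two]

lemma binom_mixedMove (e : Dy n) :
    binom (mixedMove e) = X (e, (1 : Fin 3)) * X (e, (0 : Fin 3)) - X (e, (2 : Fin 3)) := by
  set pos : Dy n × Fin 3 → ℕ := Pi.single (e, 0) 1 + Pi.single (e, 1) 1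
  set neg : Dy n × Fin 3 → ℕ := Pi.single (e, 2) 1
  have hdisj : pos ⊓ neg = 0 := by
    funext c
    simp only [pos, neg, Pi.inf_apply, Pi.add_apply, Pi.single_apply, Prod.ext_iff]
    split_ifs <;> simp_all
  have h := xPow_sub_xPow pos neg
  rw [hdisj, xPow_zero, one_mul, xPow_add, xPow_single, xPow_single, xPow_single] at h
  rw [mul_comm, h]
  congr
  funext c
  simp only [mixedMove, pos, neg, Pi.add_apply, Pi.sub_apply, Pi.single_apply]
  split_ifs <;> simp

end DesignMatrix

theorem stmt7_general (n : ℕ) :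
    toricIdeal (Ztilde n) =
      Ideal.span {f | ∃ u : Dy n × Fin 3 → ℤ,
          (AGv n).mulVec u = 0 ∧ (∀ e : Dy n, u (e, 2) = 0) ∧ f = binom u} ⊔
      Ideal.span {f | ∃ e : Dy n,
          f = X (e, (1 : Fin 3)) * X (e, (0 : Fin 3)) - X (e, (2 : Fin 3))} := by
  apply le_antisymm
  · rw [toricIdeal, Ideal.span_le]
    rintro _ ⟨u, hu, rfl⟩
    rw [SetLike.mem_coe, ← sub_add_cancel (binom u) (aeval (mergeSubst ℚ) (binom u))]
    refine add_mem (Ideal.mem_sup_right (sub_aeval_mergeSubst_mem _)) (Ideal.mem_sup_left ?_)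
    rw [aeval_mergeSubst_binom]
    exact Ideal.mul_mem_left _ _
      (Ideal.subset_span ⟨mergeExp u, AGv_mulVec_mergeExp u hu, mergeExp_two u, rfl⟩)
  · refine sup_le (Ideal.span_le.2 ?_) (Ideal.span_le.2 ?_)
    · rintro _ ⟨v, hv, hv2, rfl⟩
      exact Ideal.subset_span ⟨v, Ztilde_mulVec_eq_zero v hv hv2, rfl⟩
    · rintro _ ⟨e, rfl⟩
      exact Ideal.subset_span
        ⟨mixedMove e, Ztilde_mulVec_mixedMove e, (binom_mixedMove e).symm⟩

/-- Decomposition I_{Z̃ₙ} = I_{Aₙ} + T: the toric ideal of the simplified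
no-reciprocation model is the sum of the toric ideal of the incidence matrix of Gₙ
(in the variables p_{ij}(1,0), p_{ij}(0,1)) and the ideal T generated by the
binomials p_{ij}(0,1)·p_{ij}(1,0) − p_{ij}(1,1). -/
theorem stmt7 (n : ℕ) (hn : 2 ≤ n) :
    toricIdeal (Ztilde n) =
      Ideal.span {f | ∃ u : Dy n × Fin 3 → ℤ,
          (AGv n).mulVec u = 0 ∧ (∀ e : Dy n, u (e, 2) = 0) ∧ f = binom u} ⊔
      Ideal.span {f | ∃ e : Dy n,
          f = X (e, (1 : Fin 3)) * X (e, (0 : Fin 3)) - X (e, (2 : Fin 3))} :=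
  stmt7_general n
end

section
/- For n ≥ 4, the toric ideal of the simplified edge-dependent-reciprocation design matrix Ẽₙ decomposes as I_{Ẽₙ} = I_{Aₙ} + Q, where I_{Aₙ} is the toric ideal of the incidence matrix of the bipartite graph Gₙ (in the variables p_{ij}(1,0), p_{ij}(0,1)), and Q is the ideal generated by the quadrics p_{ij}(1,1)·p_{kl}(1,1) − p_{ik}(1,1)·p_{jl}(1,1) for all indices 1 ≤ i, j, k, l ≤ n (with p_{ij}(1,1) := p_{ji}(1,1) for i > j). -/
open MvPolynomial

/-- The dyad {i,j} of an unordered pair of distinct indices. -/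
def dyad {n : ℕ} (i j : Fin n) (h : i ≠ j) : Dy n :=
  if hij : i < j then ⟨(i, j), hij⟩ else ⟨(j, i), (h.symm).lt_of_le (not_lt.mp hij)⟩

/-- Design matrix Ẽₙ of the simplified p₁ model with edge-dependent reciprocation:
rows indexed by α₁,…,αₙ, β₁,…,βₙ, θ (= inr inr inl 0), ρ (= inr inr inl 1),
ρ₁,…,ρₙ (= inr inr inr t); columns by p_{ij}(1,0), p_{ij}(0,1), p_{ij}(1,1), i < j. -/
def Etilde (n : ℕ) : Matrix (Fin n ⊕ Fin n ⊕ Fin 2 ⊕ Fin n) (Dy n × Fin 3) ℤ :=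
  fun r c =>
    match r with
    | Sum.inl t =>
        aOf c.2 * (if t = c.1.1.1 then 1 else 0) + bOf c.2 * (if t = c.1.1.2 then 1 else 0)
    | Sum.inr (Sum.inl t) =>
        aOf c.2 * (if t = c.1.1.2 then 1 else 0) + bOf c.2 * (if t = c.1.1.1 then 1 else 0)
    | Sum.inr (Sum.inr (Sum.inl s)) => if s = 0 then aOf c.2 + bOf c.2 else aOf c.2 * bOf c.2
    | Sum.inr (Sum.inr (Sum.inr t)) =>
        aOf c.2 * bOf c.2 * ((if t = c.1.1.1 then 1 else 0) + (if t = c.1.1.2 then 1 else 0))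

/-!
Subtracting the `ρₜ` row of `Ẽₙ` from its `αₜ` and `βₜ` rows gives the rows of `Aₙ`, the `θ` row
is the sum of the `αₜ` rows, and the `ρ`, `ρₜ` rows only see the `p(1,1)` columns. Hence a kernel
vector `u` of `Ẽₙ` splits as `u = v + w`, with `v ∈ ker Aₙ` supported on the `p(1,0)`, `p(0,1)`
columns and `w` supported on the `p(1,1)` columns, where it lies in the kernel of the vertex-edge
incidence matrix of the complete graph `Kₙ`; the binomial of `u` is a combination of those of `v`
and `w`. The binomial of `w` is the difference of the edge monomials of two multigraphs on `n`
vertices with the same degrees, and such multigraphs are congruent modulo `Q`: while they share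
no edge, one quadric move `{i, j}, {k, l} ↦ {i, k}, {j, l}` in one of them creates a common edge,
which is then cancelled by induction.
-/

open Matrix

section Counts
variable {α : Type*} [Fintype α] [DecidableEq α]

@[to_additive]
theorem Multiset.prod_map_eq_prod_pow_count {M : Type*} [CommMonoid M] (m : Multiset α)
    (g : α → M) : (m.map g).prod = ∏ a, g a ^ m.count a := by
  rw [Finset.prod_multiset_map_count]
  exact Finset.prod_subset (Finset.subset_univ _) fun a _ ha => by
    rw [Multiset.count_eq_zero_of_notMem (by simpa using ha), pow_zero]

def ofCounts (f : α → ℕ) : Multiset α := ∑ a, f a • {a}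

@[simp] theorem count_ofCounts (f : α → ℕ) (a : α) : (ofCounts f).count a = f a := by
  simp [ofCounts, Multiset.count_sum', Multiset.count_singleton]

end Counts

theorem binom_natCast_count_sub {σ : Type*} [Fintype σ] [DecidableEq σ] (a b : Multiset σ) :
    binom (fun c => (a.count c : ℤ) - b.count c) =
      ((a - b).map X).prod - ((b - a).map X).prod := by
  simp only [binom, Multiset.prod_map_eq_prod_pow_count, Multiset.count_sub, neg_sub,
    Int.toNat_sub]

theorem prod_map_X_sub_mem_toricIdeal {ρ σ : Type*} [Fintype ρ] [Fintype σ] [DecidableEq σ]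
    (M : Matrix ρ σ ℤ) (a b : Multiset σ) (h : ∀ r, (a.map (M r)).sum = (b.map (M r)).sum) :
    (a.map X).prod - (b.map X).prod ∈ toricIdeal M := by
  have hker : M *ᵥ (fun c => (a.count c : ℤ) - b.count c) = 0 := by
    ext r
    simp only [mulVec, dotProduct, mul_sub, Finset.sum_sub_distrib, Pi.zero_apply]
    rw [sub_eq_zero]
    simpa [Multiset.sum_map_eq_sum_nsmul_count, mul_comm] using h r
  have hsplit : ∀ s t : Multiset σ, (s.map (X : σ → MvPolynomial σ ℚ)).prod =
      ((s - t).map X).prod * ((s ∩ t).map X).prod := fun s t => by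
    conv_lhs => rw [← Multiset.sub_add_inter s t, Multiset.map_add, Multiset.prod_add]
  have hfactor : (a.map X).prod - (b.map X).prod =
      ((a ∩ b).map X).prod * binom (fun c => (a.count c : ℤ) - b.count c) := by
    rw [hsplit a b, hsplit b a, Multiset.inter_comm b a, binom_natCast_count_sub]
    ring
  rw [hfactor]
  exact Ideal.mul_mem_left _ _ (Ideal.subset_span ⟨_, hker, rfl⟩)

theorem binom_add_of_disjoint {σ : Type*} [Fintype σ] (v w : σ → ℤ)
    (h : ∀ c, v c = 0 ∨ w c = 0) :
    binom (v + w) =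
      (∏ c, X c ^ (w c).toNat) * binom v + (∏ c, X c ^ (-v c).toNat) * binom w := by
  have hpos : ∀ c, ((v + w) c).toNat = (v c).toNat + (w c).toNat := fun c => by
    rcases h c with h | h <;> simp [h]
  have hneg : ∀ c, (-(v + w) c).toNat = (-v c).toNat + (-w c).toNat := fun c => by
    rcases h c with h | h <;> simp [h]
  simp only [binom, hpos, hneg, pow_add, Finset.prod_mul_distrib]
  ring

section Dyads
variable {n : ℕ}

def Dy.ends (e : Dy n) : Multiset (Fin n) := {e.1.1, e.1.2}

theorem dyad_of_lt {i j : Fin n} (h : i ≠ j) (hij : i < j) : dyad i j h = ⟨(i, j), hij⟩ :=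
  dif_pos hij

theorem dyad_of_gt {i j : Fin n} (h : i ≠ j) (hji : j < i) : dyad i j h = ⟨(j, i), hji⟩ :=
  dif_neg hji.not_gt

theorem dyad_comm {i j : Fin n} (h : i ≠ j) : dyad i j h = dyad j i h.symm := by
  rcases h.lt_or_gt with hij | hji
  · rw [dyad_of_lt h hij, dyad_of_gt h.symm hij]
  · rw [dyad_of_gt h hji, dyad_of_lt h.symm hji]

@[simp] theorem ends_dyad {i j : Fin n} (h : i ≠ j) : (dyad i j h).ends = {i, j} := by
  rcases h.lt_or_gt with hij | hji
  · rw [dyad_of_lt h hij]; rfl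
  · rw [dyad_of_gt h hji]; exact Multiset.pair_comm _ _

theorem dyad_fst_snd (e : Dy n) : dyad e.1.1 e.1.2 e.2.ne = e :=
  dyad_of_lt _ e.2

theorem Dy.exists_eq_dyad_of_mem_ends {e : Dy n} {t : Fin n} (ht : t ∈ e.ends) :
    ∃ s, ∃ h : t ≠ s, e = dyad t s h := by
  rcases (by simpa [Dy.ends] using ht : t = e.1.1 ∨ t = e.1.2) with rfl | rfl
  · exact ⟨_, e.2.ne, (dyad_fst_snd e).symm⟩
  · exact ⟨_, e.2.ne.symm, ((dyad_comm _).trans (dyad_fst_snd e)).symm⟩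

theorem exists_dyad_mem_of_mem_bind_ends {a : Multiset (Dy n)} {t : Fin n}
    (ht : t ∈ a.bind Dy.ends) : ∃ s, ∃ h : t ≠ s, dyad t s h ∈ a := by
  obtain ⟨e, he, hte⟩ := Multiset.mem_bind.mp ht
  obtain ⟨s, h, rfl⟩ := Dy.exists_eq_dyad_of_mem_ends hte
  exact ⟨s, h, he⟩

theorem mem_bind_ends_of_dyad_mem {a : Multiset (Dy n)} {i j : Fin n} {h : i ≠ j}
    (ha : dyad i j h ∈ a) : i ∈ a.bind Dy.ends ∧ j ∈ a.bind Dy.ends :=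
  ⟨Multiset.mem_bind.mpr ⟨_, ha, by simp⟩, Multiset.mem_bind.mpr ⟨_, ha, by simp⟩⟩

theorem eq_or_eq_of_dyad_eq {i j k l : Fin n} {h : i ≠ j} {h' : k ≠ l}
    (heq : dyad i j h = dyad k l h') : i = k ∨ i = l := by
  have hi : i ∈ (dyad k l h').ends := heq ▸ by simp
  simpa using hi

end Dyads

section Quadrics
variable {n : ℕ}

noncomputable def quadricIdeal (n : ℕ) : Ideal (MvPolynomial (Dy n × Fin 3) ℚ) :=
  Ideal.span {f | ∃ (i j k l : Fin n) (hij : i ≠ j) (hkl : k ≠ l)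
      (hik : i ≠ k) (hjl : j ≠ l),
      f = X (dyad i j hij, (2 : Fin 3)) * X (dyad k l hkl, (2 : Fin 3)) -
          X (dyad i k hik, (2 : Fin 3)) * X (dyad j l hjl, (2 : Fin 3))}

noncomputable def edgeMonomial (a : Multiset (Dy n)) : MvPolynomial (Dy n × Fin 3) ℚ :=
  (a.map fun e => X (e, 2)).prod

def QuadricEquiv (a b : Multiset (Dy n)) : Prop :=
  a.bind Dy.ends = b.bind Dy.ends ∧
    Ideal.Quotient.mk (quadricIdeal n) (edgeMonomial a) =
      Ideal.Quotient.mk (quadricIdeal n) (edgeMonomial b)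

theorem QuadricEquiv.refl (a : Multiset (Dy n)) : QuadricEquiv a a := ⟨rfl, rfl⟩

theorem exists_switch {a : Multiset (Dy n)} {i j k l : Fin n} {hij : i ≠ j} {hkl : k ≠ l}
    (hik : i ≠ k) (hjl : j ≠ l) (hne : dyad i j hij ≠ dyad k l hkl)
    (h₁ : dyad i j hij ∈ a) (h₂ : dyad k l hkl ∈ a) :
    ∃ a', dyad i k hik ∈ a' ∧ QuadricEquiv a a' := by
  set c := (a.erase (dyad i j hij)).erase (dyad k l hkl)
  have ha : a = dyad i j hij ::ₘ dyad k l hkl ::ₘ c := by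
    rw [Multiset.cons_erase ((Multiset.mem_erase_of_ne hne.symm).mpr h₂),
      Multiset.cons_erase h₁]
  have hquad : Ideal.Quotient.mk (quadricIdeal n)
      (X (dyad i j hij, 2) * X (dyad k l hkl, 2)) =
      Ideal.Quotient.mk (quadricIdeal n) (X (dyad i k hik, 2) * X (dyad j l hjl, 2)) :=
    Ideal.Quotient.eq.mpr (Ideal.subset_span ⟨i, j, k, l, hij, hkl, hik, hjl, rfl⟩)
  refine ⟨dyad i k hik ::ₘ dyad j l hjl ::ₘ c, Multiset.mem_cons_self _ _, ?_, ?_⟩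
  · rw [ha]
    simp only [Multiset.cons_bind, ends_dyad, Multiset.insert_eq_cons, Multiset.cons_add,
      Multiset.singleton_add, Multiset.cons_swap j k]
  · rw [ha]
    simp only [edgeMonomial, Multiset.map_cons, Multiset.prod_cons, ← mul_assoc, map_mul]
    rw [← map_mul, hquad, map_mul]

theorem exists_quadricEquiv_common_mem {a b : Multiset (Dy n)}
    (h : a.bind Dy.ends = b.bind Dy.ends) (ha : a ≠ 0) :
    ∃ a' b', QuadricEquiv a a' ∧ QuadricEquiv b b' ∧ ∃ e, e ∈ a' ∧ e ∈ b' := by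
  by_cases hcommon : ∃ e, e ∈ a ∧ e ∈ b
  · exact ⟨a, b, .refl a, .refl b, hcommon⟩
  push Not at hcommon
  obtain ⟨e, he⟩ := Multiset.exists_mem_of_ne_zero ha
  obtain ⟨i, j, hij, rfl⟩ : ∃ i j, ∃ hij : i ≠ j, dyad i j hij = e :=
    ⟨_, _, _, dyad_fst_snd e⟩
  obtain ⟨hi, hj⟩ := mem_bind_ends_of_dyad_mem he
  obtain ⟨k, hik, hik_mem⟩ := exists_dyad_mem_of_mem_bind_ends (h ▸ hi)
  obtain ⟨m, hjm, hjm_mem⟩ := exists_dyad_mem_of_mem_bind_ends (h ▸ hj)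
  -- Now `{i, j} ∈ a` and `{i, k}, {j, m} ∈ b`. If `k ≠ m`, switching `{i, k}, {j, m}` to
  -- `{i, j}, {k, m}` in `b` creates a common edge; if `k = m`, some `{k, l} ∈ a` has
  -- `l ∉ {i, j}`, and switching `{i, j}, {k, l}` to `{i, k}, {j, l}` in `a` does.
  by_cases hkm : k = m
  · subst hkm
    obtain ⟨l, hkl, hkl_mem⟩ :=
      exists_dyad_mem_of_mem_bind_ends (h ▸ (mem_bind_ends_of_dyad_mem hik_mem).2)
    have hil : i ≠ l := by
      rintro rfl
      exact hcommon _ hkl_mem (by rwa [dyad_comm])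
    have hjl : j ≠ l := by
      rintro rfl
      exact hcommon _ hkl_mem (by rwa [dyad_comm])
    have hne : dyad i j hij ≠ dyad k l hkl := fun heq => by
      rcases eq_or_eq_of_dyad_eq heq.symm with rfl | rfl
      · exact hik rfl
      · exact hcommon _ he hik_mem
    obtain ⟨a', hmem, hequiv⟩ := exists_switch hik hjl hne he hkl_mem
    exact ⟨a', b, hequiv, .refl b, _, hmem, hik_mem⟩
  · have hne : dyad i k hik ≠ dyad j m hjm := fun heq => by
      obtain rfl : j = k := (eq_or_eq_of_dyad_eq heq.symm).resolve_left hij.symm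
      exact hcommon _ he hik_mem
    obtain ⟨b', hmem, hequiv⟩ := exists_switch hij hkm hne hik_mem hjm_mem
    exact ⟨a, b', .refl a, hequiv, _, he, hmem⟩

theorem edgeMonomial_cons (e : Dy n) (a : Multiset (Dy n)) :
    edgeMonomial (e ::ₘ a) = X (e, 2) * edgeMonomial a := by
  simp [edgeMonomial]

theorem mk_edgeMonomial_eq_of_bind_ends_eq {a b : Multiset (Dy n)}
    (h : a.bind Dy.ends = b.bind Dy.ends) :
    Ideal.Quotient.mk (quadricIdeal n) (edgeMonomial a) =
      Ideal.Quotient.mk (quadricIdeal n) (edgeMonomial b) := by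
  induction hN : Multiset.card (a.bind Dy.ends) using Nat.strong_induction_on
    generalizing a b with
  | _ N ih =>
  rcases eq_or_ne a 0 with rfl | ha
  · obtain rfl : b = 0 := Multiset.eq_zero_of_forall_notMem fun e he => by
      simpa [← h] using Multiset.mem_bind.mpr ⟨e, he, (by simp [Dy.ends] : e.1.1 ∈ e.ends)⟩
    rfl
  obtain ⟨a', b', ⟨ha_ends, ha_mk⟩, ⟨hb_ends, hb_mk⟩, e, hea, heb⟩ :=
    exists_quadricEquiv_common_mem h ha
  rw [ha_mk, hb_mk, ← Multiset.cons_erase hea, ← Multiset.cons_erase heb, edgeMonomial_cons,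
    edgeMonomial_cons, map_mul, map_mul]
  have ha' : a'.bind Dy.ends = e.ends + (a'.erase e).bind Dy.ends := by
    rw [← Multiset.cons_bind, Multiset.cons_erase hea]
  have hb' : b'.bind Dy.ends = e.ends + (b'.erase e).bind Dy.ends := by
    rw [← Multiset.cons_bind, Multiset.cons_erase heb]
  have hrest : (a'.erase e).bind Dy.ends = (b'.erase e).bind Dy.ends :=
    add_left_cancel (ha'.symm.trans (ha_ends.symm.trans (h.trans (hb_ends.trans hb'))))
  have hlt : Multiset.card ((a'.erase e).bind Dy.ends) < N := by
    rw [← hN, ha_ends, ha', Multiset.card_add]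
    simp [Dy.ends]
  rw [ih _ hlt hrest rfl]

end Quadrics

section DesignMatrix
variable {n : ℕ} (u : Dy n × Fin 3 → ℤ)

theorem Etilde_mulVec_alpha (t : Fin n) :
    (Etilde n *ᵥ u) (.inl t) =
      (AGv n *ᵥ u) (.inl t) + (Etilde n *ᵥ u) (.inr (.inr (.inr t))) := by
  simp only [mulVec, dotProduct, ← Finset.sum_add_distrib, ← add_mul]
  refine Finset.sum_congr rfl fun ⟨e, k⟩ _ => congrArg (· * u (e, k)) ?_
  fin_cases k <;> simp [Etilde, AGv, aOf, bOf]

theorem Etilde_mulVec_beta (t : Fin n) :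
    (Etilde n *ᵥ u) (.inr (.inl t)) =
      (AGv n *ᵥ u) (.inr t) + (Etilde n *ᵥ u) (.inr (.inr (.inr t))) := by
  simp only [mulVec, dotProduct, ← Finset.sum_add_distrib, ← add_mul]
  refine Finset.sum_congr rfl fun ⟨e, k⟩ _ => congrArg (· * u (e, k)) ?_
  fin_cases k <;> simp [Etilde, AGv, aOf, bOf, add_comm]

theorem Etilde_mulVec_theta :
    (Etilde n *ᵥ u) (.inr (.inr (.inl 0))) = ∑ t, (Etilde n *ᵥ u) (.inl t) := by
  simp only [mulVec, dotProduct]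
  rw [Finset.sum_comm]
  refine Finset.sum_congr rfl fun ⟨e, k⟩ _ => ?_
  rw [← Finset.sum_mul]
  congr 1
  simp [Etilde, Finset.sum_add_distrib]

theorem Etilde_mulVec_rho :
    (Etilde n *ᵥ u) (.inr (.inr (.inl 1))) = ∑ e, u (e, 2) := by
  simp [mulVec, dotProduct, Fintype.sum_prod_type, Fin.sum_univ_three, Etilde, aOf, bOf]

theorem Etilde_mulVec_rho_vertex (t : Fin n) :
    (Etilde n *ᵥ u) (.inr (.inr (.inr t))) = ∑ e, (e.ends.count t : ℤ) * u (e, 2) := by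
  simp [mulVec, dotProduct, Fintype.sum_prod_type, Fin.sum_univ_three, Etilde, aOf, bOf,
    Dy.ends, Multiset.count_cons, Multiset.count_singleton, add_comm]

end DesignMatrix

section Decomposition
variable {n : ℕ}

noncomputable def incidenceToricIdeal (n : ℕ) : Ideal (MvPolynomial (Dy n × Fin 3) ℚ) :=
  Ideal.span {f | ∃ u : Dy n × Fin 3 → ℤ,
      (AGv n).mulVec u = 0 ∧ (∀ e : Dy n, u (e, 2) = 0) ∧ f = binom u}

theorem AGv_mulVec_eq_zero {u : Dy n × Fin 3 → ℤ} (hu : Etilde n *ᵥ u = 0) :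
    AGv n *ᵥ u = 0 := by
  ext (t | t)
  · simpa [hu] using (Etilde_mulVec_alpha u t).symm
  · simpa [hu] using (Etilde_mulVec_beta u t).symm

theorem Etilde_mulVec_eq_zero {u : Dy n × Fin 3 → ℤ} (hA : AGv n *ᵥ u = 0)
    (h2 : ∀ e, u (e, 2) = 0) : Etilde n *ᵥ u = 0 := by
  have hρ : ∀ t, (Etilde n *ᵥ u) (.inr (.inr (.inr t))) = 0 := fun t => by
    simp [Etilde_mulVec_rho_vertex, h2]
  have hα : ∀ t, (Etilde n *ᵥ u) (.inl t) = 0 := fun t => by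
    simp [Etilde_mulVec_alpha, hA, hρ]
  ext (t | t | s | t)
  · exact hα t
  · simp [Etilde_mulVec_beta, hA, hρ]
  · fin_cases s
    · simp [Etilde_mulVec_theta, hα]
    · simp [Etilde_mulVec_rho, h2]
  · exact hρ t

theorem incidenceToricIdeal_le : incidenceToricIdeal n ≤ toricIdeal (Etilde n) :=
  Ideal.span_le.mpr fun _ ⟨u, hA, h2, hf⟩ =>
    Ideal.subset_span ⟨u, Etilde_mulVec_eq_zero hA h2, hf⟩

theorem exists_Etilde_dyad_two_eq (r : Fin n ⊕ Fin n ⊕ Fin 2 ⊕ Fin n) :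
    ∃ (w : Fin n → ℤ) (c : ℤ),
      ∀ i j (h : i ≠ j), Etilde n r (dyad i j h, 2) = w i + w j + c := by
  obtain ⟨w, c, hw⟩ : ∃ (w : Fin n → ℤ) (c : ℤ),
      ∀ e : Dy n, Etilde n r (e, 2) = w e.1.1 + w e.1.2 + c := by
    rcases r with t | t | s | t
    · exact ⟨fun i => if t = i then 1 else 0, 0, fun e => by simp [Etilde, aOf, bOf, eq_comm]⟩
    · exact ⟨fun i => if t = i then 1 else 0, 0, fun e => by
        simp [Etilde, aOf, bOf, eq_comm, add_comm]⟩
    · exact ⟨0, if s = 0 then 2 else 1, fun e => by fin_cases s <;> simp [Etilde, aOf, bOf]⟩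
    · exact ⟨fun i => if t = i then 1 else 0, 0, fun e => by simp [Etilde, aOf, bOf, eq_comm]⟩
  refine ⟨w, c, fun i j h => ?_⟩
  rcases h.lt_or_gt with hij | hji
  · rw [hw, dyad_of_lt h hij]
  · rw [hw, dyad_of_gt h hji]; ring

theorem quadricIdeal_le : quadricIdeal n ≤ toricIdeal (Etilde n) := by
  refine Ideal.span_le.mpr ?_
  rintro _ ⟨i, j, k, l, hij, hkl, hik, hjl, rfl⟩
  have := prod_map_X_sub_mem_toricIdeal (Etilde n)
    {(dyad i j hij, 2), (dyad k l hkl, 2)} {(dyad i k hik, 2), (dyad j l hjl, 2)} fun r => by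
      obtain ⟨w, c, hw⟩ := exists_Etilde_dyad_two_eq r
      simp only [Multiset.insert_eq_cons, Multiset.map_cons, Multiset.map_singleton,
        Multiset.sum_cons, Multiset.sum_singleton, hw]
      ring
  simpa using this

theorem AGv_mulVec_colTwo (z : Dy n → ℤ) :
    AGv n *ᵥ (fun c => if c.2 = 2 then z c.1 else 0) = 0 := by
  ext r
  refine Finset.sum_eq_zero fun ⟨e, k⟩ _ => ?_
  fin_cases k <;> rcases r with t | t <;> simp [AGv]

theorem binom_colTwo (z : Dy n → ℤ) :
    binom (fun c : Dy n × Fin 3 => if c.2 = 2 then z c.1 else 0) =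
      edgeMonomial (ofCounts fun e => (z e).toNat) -
        edgeMonomial (ofCounts fun e => (-z e).toNat) := by
  simp [binom, edgeMonomial, Multiset.prod_map_eq_prod_pow_count, Fintype.prod_prod_type,
    Fin.prod_univ_three]

theorem bind_ends_ofCounts_eq (z : Dy n → ℤ)
    (hz : ∀ t, ∑ e, (e.ends.count t : ℤ) * z e = 0) :
    (ofCounts fun e => (z e).toNat).bind Dy.ends =
      (ofCounts fun e => (-z e).toNat).bind Dy.ends := by
  ext t
  simp only [Multiset.count_bind, Multiset.sum_map_eq_sum_nsmul_count, count_ofCounts,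
    smul_eq_mul]
  apply Nat.cast_injective (R := ℤ)
  push_cast
  rw [← sub_eq_zero, ← Finset.sum_sub_distrib, ← hz t]
  refine Finset.sum_congr rfl fun e _ => ?_
  linear_combination (Multiset.count t e.ends : ℤ) * Int.toNat_sub_toNat_neg (z e)

theorem binom_mem_sup {u : Dy n × Fin 3 → ℤ} (hu : Etilde n *ᵥ u = 0) :
    binom u ∈ incidenceToricIdeal n ⊔ quadricIdeal n := by
  set z : Dy n → ℤ := fun e => u (e, 2)
  set v : Dy n × Fin 3 → ℤ := fun c => if c.2 = 2 then 0 else u c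
  set w : Dy n × Fin 3 → ℤ := fun c => if c.2 = 2 then z c.1 else 0
  have huvw : u = v + w := by
    ext ⟨e, k⟩
    by_cases hk : k = 2 <;> simp [v, w, z, hk]
  have hdisj : ∀ c, v c = 0 ∨ w c = 0 := fun c => by
    by_cases hc : c.2 = 2 <;> simp [v, w, hc]
  have hv : AGv n *ᵥ v = 0 := by
    have h := AGv_mulVec_eq_zero hu
    rwa [huvw, mulVec_add, (AGv_mulVec_colTwo z : AGv n *ᵥ w = 0), add_zero] at h
  have hw : binom w ∈ quadricIdeal n := by
    rw [binom_colTwo]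
    refine Ideal.Quotient.eq.mp (mk_edgeMonomial_eq_of_bind_ends_eq
      (bind_ends_ofCounts_eq z fun t => ?_))
    simpa [Etilde_mulVec_rho_vertex] using congrFun hu (.inr (.inr (.inr t)))
  rw [huvw, binom_add_of_disjoint v w hdisj]
  exact add_mem
    (Ideal.mem_sup_left (Ideal.mul_mem_left _ _ (Ideal.subset_span ⟨v, hv, by simp [v], rfl⟩)))
    (Ideal.mem_sup_right (Ideal.mul_mem_left _ _ hw))

end Decomposition

theorem stmt8_general (n : ℕ) :
    toricIdeal (Etilde n) =
      Ideal.span {f | ∃ u : Dy n × Fin 3 → ℤ,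
          (AGv n).mulVec u = 0 ∧ (∀ e : Dy n, u (e, 2) = 0) ∧ f = binom u} ⊔
      Ideal.span {f | ∃ (i j k l : Fin n) (hij : i ≠ j) (hkl : k ≠ l)
          (hik : i ≠ k) (hjl : j ≠ l),
          f = X (dyad i j hij, (2 : Fin 3)) * X (dyad k l hkl, (2 : Fin 3)) -
              X (dyad i k hik, (2 : Fin 3)) * X (dyad j l hjl, (2 : Fin 3))} :=
  le_antisymm (Ideal.span_le.mpr fun _ ⟨_, hu, hf⟩ => hf ▸ binom_mem_sup hu)
    (sup_le incidenceToricIdeal_le quadricIdeal_le)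

/-- Decomposition I_{Ẽₙ} = I_{Aₙ} + Q for n ≥ 4: the toric ideal of the simplified
edge-dependent-reciprocation model is the sum of the toric ideal of the incidence
matrix of Gₙ (in the variables p_{ij}(1,0), p_{ij}(0,1)) and the ideal Q generated by
the quadrics p_{ij}(1,1)·p_{kl}(1,1) − p_{ik}(1,1)·p_{jl}(1,1). -/
theorem stmt8 (n : ℕ) (hn : 4 ≤ n) :
    toricIdeal (Etilde n) =
      Ideal.span {f | ∃ u : Dy n × Fin 3 → ℤ,
          (AGv n).mulVec u = 0 ∧ (∀ e : Dy n, u (e, 2) = 0) ∧ f = binom u} ⊔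
      Ideal.span {f | ∃ (i j k l : Fin n) (hij : i ≠ j) (hkl : k ≠ l)
          (hik : i ≠ k) (hjl : j ≠ l),
          f = X (dyad i j hij, (2 : Fin 3)) * X (dyad k l hkl, (2 : Fin 3)) -
              X (dyad i k hik, (2 : Fin 3)) * X (dyad j l hjl, (2 : Fin 3))} :=
  stmt8_general n
end

section
/- Let P₁, …, P_k be polytopes in ℝ^d and P = P₁ + ⋯ + P_k their Minkowski sum. A nonempty subset F of P is a face of P if and only if F = F₁ + ⋯ + F_k where there exists c ∈ ℝ^d with F_i = S(P_i; c) := argmax_{x ∈ P_i} ⟨c, x⟩ for all i. Moreover, the decomposition F = F₁ + ⋯ + F_k of any nonempty face F is unique. -/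
/-!
A sum of points `a + b ∈ A + B` maximizes an additive functional on `A + B` exactly when `a`
maximizes it on `A` and `b` on `B`; hence `S(P₁ + ⋯ + P_k; c) = S(P₁; c) + ⋯ + S(P_k; c)`, which
is the description of the faces. For uniqueness, if `c` and `c'` give the same nonempty sum, pick
`b` in the sum of the `c`-faces of the other summands; for `x ∈ S(P_i; c)` the point `x + b` lies in
the common sum, which is the `c'`-face of `P₁ + ⋯ + P_k`, so `x` maximizes `c'` on `P_i`.
-/

open Pointwise

/-- S(P; c): the set of maximizers of the linear functional x ↦ ⟨c, x⟩ over P. -/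
def smax {d : ℕ} (P : Set (Fin d → ℝ)) (c : Fin d → ℝ) : Set (Fin d → ℝ) :=
  {x ∈ P | ∀ y ∈ P, ∑ t, c t * y t ≤ ∑ t, c t * x t}

def maximizers {E β : Type*} [Preorder β] (f : E → β) (A : Set E) : Set E :=
  {x ∈ A | IsMaxOn f A x}

theorem maximizers_singleton {E β : Type*} [Preorder β] (f : E → β) (x : E) :
    maximizers f {x} = {x} := by
  ext y
  simp only [maximizers, Set.mem_ofPred_eq, Set.mem_singleton_iff, isMaxOn_iff, forall_eq,
    and_iff_left_iff_imp]
  rintro rfl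
  exact le_rfl

section Maximizers

variable {E β : Type*} [AddCommMonoid E] [AddCommMonoid β] [PartialOrder β]
  [IsOrderedCancelAddMonoid β] (f : E →+ β)

theorem mem_maximizers_of_add_mem_maximizers {A B : Set E} {a b : E} (ha : a ∈ A) (hb : b ∈ B)
    (hab : a + b ∈ maximizers f (A + B)) : a ∈ maximizers f A := by
  refine ⟨ha, isMaxOn_iff.2 fun a' ha' => ?_⟩
  have := isMaxOn_iff.1 hab.2 (a' + b) (Set.add_mem_add ha' hb)
  rw [map_add, map_add] at this
  exact le_of_add_le_add_right this

theorem maximizers_add (A B : Set E) :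
    maximizers f (A + B) = maximizers f A + maximizers f B := by
  ext z
  constructor
  · intro hz
    obtain ⟨a, ha, b, hb, rfl⟩ := Set.mem_add.1 hz.1
    refine Set.add_mem_add (mem_maximizers_of_add_mem_maximizers f ha hb hz) ?_
    rw [add_comm a, add_comm A] at hz
    exact mem_maximizers_of_add_mem_maximizers f hb ha hz
  · rintro ⟨a, ⟨ha, haA⟩, b, ⟨hb, hbB⟩, rfl⟩
    refine ⟨Set.add_mem_add ha hb, isMaxOn_iff.2 ?_⟩
    rintro _ ⟨a', ha', b', hb', rfl⟩
    rw [map_add, map_add]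
    exact add_le_add (isMaxOn_iff.1 haA a' ha') (isMaxOn_iff.1 hbB b' hb')

theorem maximizers_sum {ι : Type*} (s : Finset ι) (A : ι → Set E) :
    maximizers f (∑ i ∈ s, A i) = ∑ i ∈ s, maximizers f (A i) := by
  classical
  induction s using Finset.induction_on with
  | empty => exact maximizers_singleton f 0
  | insert i s hi ih => rw [Finset.sum_insert hi, Finset.sum_insert hi, maximizers_add, ih]

theorem maximizers_subset_of_add_eq (g : E →+ β) {A B : Set E}
    (h : maximizers f A + maximizers f B = maximizers g A + maximizers g B)
    (hB : (maximizers f B).Nonempty) : maximizers f A ⊆ maximizers g A := by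
  obtain ⟨b, hb⟩ := hB
  intro a ha
  have hab : a + b ∈ maximizers g (A + B) := by
    rw [maximizers_add, ← h]
    exact Set.add_mem_add ha hb
  exact mem_maximizers_of_add_mem_maximizers g ha.1 hb.1 hab

theorem maximizers_eq_of_sum_eq {ι : Type*} (g : E →+ β) {s : Finset ι}
    {A : ι → Set E} (h : ∑ i ∈ s, maximizers f (A i) = ∑ i ∈ s, maximizers g (A i))
    (hne : (∑ i ∈ s, maximizers f (A i)).Nonempty) {i : ι} (hi : i ∈ s) :
    maximizers f (A i) = maximizers g (A i) := by
  classical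
  have hf := Finset.add_sum_erase s (fun j => maximizers f (A j)) hi
  have hg := Finset.add_sum_erase s (fun j => maximizers g (A j)) hi
  rw [← maximizers_sum] at hf hg
  have hsplit := hf.trans (h.trans hg.symm)
  have hne_f := hf ▸ hne
  have hne_g := hg ▸ h ▸ hne
  exact (maximizers_subset_of_add_eq f g hsplit hne_f.of_add_right).antisymm
    (maximizers_subset_of_add_eq g f hsplit.symm hne_g.of_add_right)

end Maximizers

theorem smax_eq_maximizers {d : ℕ} (P : Set (Fin d → ℝ)) (c : Fin d → ℝ) :
    smax P c = maximizers (dotProductBilin ℝ ℝ c).toAddMonoidHom P :=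
  rfl

theorem stmt11_general (d k : ℕ) (P : Fin k → Set (Fin d → ℝ))
    (F : Set (Fin d → ℝ)) (hne : F.Nonempty) :
    ((∃ c, F = smax (∑ i, P i) c) ↔ ∃ c, F = ∑ i, smax (P i) c) ∧
    (∀ c c', F = ∑ i, smax (P i) c → F = ∑ i, smax (P i) c' →
      ∀ i, smax (P i) c = smax (P i) c') := by
  refine ⟨by simp only [smax_eq_maximizers, maximizers_sum], fun c c' hc hc' i => ?_⟩
  simp only [smax_eq_maximizers] at hc hc' ⊢
  exact maximizers_eq_of_sum_eq _ _ (hc.symm.trans hc') (hc ▸ hne) (Finset.mem_univ i)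

/-- Gritzmann–Sturmfels: for polytopes P₁, …, P_k with Minkowski sum P, a nonempty
subset F of P is a face of P iff F = F₁ + ⋯ + F_k where F_i = S(P_i; c) for a common
c; moreover this decomposition of a nonempty face is unique. -/
theorem stmt11 (d k : ℕ) (P : Fin k → Set (Fin d → ℝ))
    (hP : ∀ i, ∃ S : Finset (Fin d → ℝ), P i = convexHull ℝ (S : Set (Fin d → ℝ)))
    (F : Set (Fin d → ℝ)) (hne : F.Nonempty) (hsub : F ⊆ ∑ i, P i) :
    ((∃ c, F = smax (∑ i, P i) c) ↔ ∃ c, F = ∑ i, smax (P i) c) ∧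
    (∀ c c', F = ∑ i, smax (P i) c → F = ∑ i, smax (P i) c' →
      ∀ i, smax (P i) c = smax (P i) c') :=
  stmt11_general d k P F hne
end

section
/- With A the p₁ design matrix (containing the λ_{ij} rows), P_A = {Ap : p ∈ Dₙ} the marginal polytope, and C_A = cone(A) the cone generated by the columns of A: for t ∈ P_A, t lies in the relative interior of P_A if and only if t lies in the relative interior of C_A. -/
/-!
The λ-rows of `A *ᵥ p` are the block sums of `p`, so the marginal polytope is the slice
`P = C ∩ H` of the cone `C` by the affine subspace `H` on which every λ-coordinate is `1`.
Slicing by an affine subspace can only enlarge the relative interior at points of `H`, which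
gives `ri C ∩ H ⊆ ri P`. Conversely, a point `t ∈ ri P` can be pushed slightly beyond itself,
away from the barycentre `A *ᵥ (1/4)`, without leaving `P`; so `t` lies on an open segment from
the barycentre to a point of `P`, i.e. `t = A *ᵥ p` with `p` strictly positive. The image of the
open positive orthant is open in the range of `A`, which contains the affine span of `C`,
hence `t ∈ ri C`.
-/

open Set Filter Topology AffineMap

section IntrinsicInterior

variable {𝕜 V P : Type*} [Ring 𝕜] [AddCommGroup V] [Module 𝕜 V] [TopologicalSpace P]
  [AddTorsor V P]

theorem mem_intrinsicInterior_iff_exists_isOpen {s : Set P} {x : P} :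
    x ∈ intrinsicInterior 𝕜 s ↔
      x ∈ affineSpan 𝕜 s ∧ ∃ U : Set P, IsOpen U ∧ x ∈ U ∧ U ∩ affineSpan 𝕜 s ⊆ s := by
  constructor
  · rintro ⟨y, hy, rfl⟩
    obtain ⟨O, hOs, hO, hyO⟩ := mem_interior.mp hy
    obtain ⟨U, hU, rfl⟩ := isOpen_induced_iff.mp hO
    exact ⟨y.2, U, hU, hyO, fun z ⟨hzU, hz⟩ => hOs (show (⟨z, hz⟩ : affineSpan 𝕜 s) ∈ _ from hzU)⟩
  · rintro ⟨hx, U, hU, hxU, hUs⟩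
    exact ⟨⟨x, hx⟩, mem_interior.mpr ⟨Subtype.val ⁻¹' U, fun z hz => hUs ⟨hz, z.2⟩,
      hU.preimage continuous_subtype_val, hxU⟩, rfl⟩

theorem intrinsicInterior_inter_subset (s : Set P) (L : AffineSubspace 𝕜 P) :
    intrinsicInterior 𝕜 s ∩ L ⊆ intrinsicInterior 𝕜 (s ∩ L) := by
  rintro x ⟨hx, hxL⟩
  obtain ⟨-, U, hU, hxU, hUs⟩ := mem_intrinsicInterior_iff_exists_isOpen.mp hx
  have hspan : (affineSpan 𝕜 (s ∩ L) : Set P) ⊆ affineSpan 𝕜 s ∩ L :=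
    subset_inter (affineSpan_mono 𝕜 inter_subset_left)
      (affineSpan_le.mpr inter_subset_right)
  refine mem_intrinsicInterior_iff_exists_isOpen.mpr
    ⟨subset_affineSpan 𝕜 _ ⟨intrinsicInterior_subset hx, hxL⟩, U, hU, hxU, ?_⟩
  rintro z ⟨hzU, hz⟩
  exact ⟨hUs ⟨hzU, (hspan hz).1⟩, (hspan hz).2⟩

end IntrinsicInterior

section RealVectorSpace

variable {E F : Type*} [AddCommGroup E] [Module ℝ E] [TopologicalSpace E]
  [IsTopologicalAddGroup E] [ContinuousSMul ℝ E]

theorem exists_mem_openSegment_of_mem_intrinsicInterior {s : Set E} {x y : E}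
    (hx : x ∈ intrinsicInterior ℝ s) (hy : y ∈ affineSpan ℝ s) :
    ∃ z ∈ s, x ∈ openSegment ℝ y z := by
  obtain ⟨hxs, U, hU, hxU, hUs⟩ := mem_intrinsicInterior_iff_exists_isOpen.mp hx
  have hnear : ∀ᶠ r in 𝓝[>] (1 : ℝ), lineMap y x r ∈ U :=
    nhdsWithin_le_nhds <| lineMap_continuous.continuousAt.preimage_mem_nhds
      (by simpa using hU.mem_nhds hxU)
  obtain ⟨r, hrU, hr⟩ := (hnear.and self_mem_nhdsWithin).exists
  refine ⟨lineMap y x r, hUs ⟨hrU, AffineMap.lineMap_mem r hy hxs⟩, ?_⟩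
  have hx_eq : lineMap y (lineMap y x r) r⁻¹ = x := by
    rw [lineMap_lineMap_right, inv_mul_cancel₀ (by positivity : r ≠ 0), lineMap_apply_one]
  have hseg :=
    lineMap_mem_openSegment ℝ y (lineMap y x r) ⟨by positivity, inv_lt_one_of_one_lt₀ hr⟩
  rwa [hx_eq] at hseg

variable [AddCommGroup F] [Module ℝ F] [TopologicalSpace F] [IsTopologicalAddGroup F]
  [ContinuousSMul ℝ F] [T2Space F]

theorem LinearMap.image_subset_intrinsicInterior [FiniteDimensional ℝ E] (f : E →ₗ[ℝ] F)
    {O : Set E} (hO : IsOpen O) {s : Set F} (hOs : f '' O ⊆ s) (hs : s ⊆ LinearMap.range f) :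
    f '' O ⊆ intrinsicInterior ℝ s := by
  obtain ⟨U, hU, hUO⟩ := isOpen_induced_iff.mp <|
    f.rangeRestrict.isOpenMap_of_finiteDimensional f.surjective_rangeRestrict O hO
  have hspan : (affineSpan ℝ s : Set F) ⊆ LinearMap.range f :=
    affineSpan_le (Q := (LinearMap.range f).toAffineSubspace) |>.mpr hs
  have hmem : ∀ z (hz : z ∈ LinearMap.range f), z ∈ U ↔ (⟨z, hz⟩ : LinearMap.range f) ∈
      f.rangeRestrict '' O := fun z hz => by rw [← hUO]; rfl
  rintro _ ⟨p, hp, rfl⟩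
  refine mem_intrinsicInterior_iff_exists_isOpen.mpr
    ⟨subset_affineSpan ℝ s (hOs ⟨p, hp, rfl⟩), U, hU, ?_, ?_⟩
  · exact (hmem _ ⟨p, rfl⟩).mpr ⟨p, hp, rfl⟩
  · rintro z ⟨hzU, hz⟩
    obtain ⟨q, hq, hqz⟩ := (hmem z (hspan hz)).mp hzU
    exact hOs ⟨q, hq, congrArg Subtype.val hqz⟩

end RealVectorSpace

section DesignMatrix

theorem openSegment_subset_setOf_pos {n : Type*} {x y : n → ℝ} (hx : ∀ c, 0 < x c)
    (hy : ∀ c, 0 ≤ y c) : openSegment ℝ x y ⊆ {p | ∀ c, 0 < p c} := by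
  rintro _ ⟨a, b, ha, hb, -, rfl⟩ c
  exact add_pos_of_pos_of_nonneg (mul_pos ha (hx c)) (mul_nonneg hb.le (hy c))

theorem Matrix.mulVec_image_pos_subset_intrinsicInterior_cone {m n : Type*} [Fintype n]
    (A : Matrix m n ℝ) :
    A.mulVec '' {p | ∀ c, 0 < p c} ⊆
      intrinsicInterior ℝ {s | ∃ y : n → ℝ, (∀ c, 0 ≤ y c) ∧ s = A.mulVec y} := by
  have hO : IsOpen {p : n → ℝ | ∀ c, 0 < p c} := by
    simp only [ofPred_forall]
    exact isOpen_iInter_of_finite fun c => isOpen_lt continuous_const (continuous_apply c)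
  refine A.mulVecLin.image_subset_intrinsicInterior hO ?_ ?_
  · rintro _ ⟨p, hp, rfl⟩
    exact ⟨p, fun c => (hp c).le, rfl⟩
  · rintro _ ⟨y, -, rfl⟩
    exact ⟨y, rfl⟩

variable {ι κ R : Type*} [Fintype ι] [Fintype κ] [DecidableEq ι]
  (A : Matrix (ι ⊕ R) (ι × κ) ℝ)

theorem mulVec_inl_eq_sum
    (hlam : ∀ (e : ι) (c : ι × κ), A (Sum.inl e) c = if c.1 = e then 1 else 0)
    (y : ι × κ → ℝ) (e : ι) :
    A.mulVec y (Sum.inl e) = ∑ k, y (e, k) := by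
  simp only [Matrix.mulVec, dotProduct, hlam, Fintype.sum_prod_type]
  simp

theorem mulVec_image_simplices_eq_cone_inter
    (hlam : ∀ (e : ι) (c : ι × κ), A (Sum.inl e) c = if c.1 = e then 1 else 0) :
    (fun p => A.mulVec p) '' {p : ι × κ → ℝ | (∀ c, 0 ≤ p c) ∧ ∀ e, ∑ k, p (e, k) = 1} =
      {s | ∃ y : ι × κ → ℝ, (∀ c, 0 ≤ y c) ∧ s = A.mulVec y} ∩ {x | ∀ e, x (Sum.inl e) = 1} := by
  ext x
  simp only [mem_image, mem_inter_iff, mem_ofPred_eq]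
  constructor
  · rintro ⟨p, ⟨hp, hsum⟩, rfl⟩
    exact ⟨⟨p, hp, rfl⟩, fun e => (mulVec_inl_eq_sum A hlam p e).trans (hsum e)⟩
  · rintro ⟨⟨y, hy, rfl⟩, hone⟩
    exact ⟨y, ⟨hy, fun e => (mulVec_inl_eq_sum A hlam y e).symm.trans (hone e)⟩, rfl⟩

end DesignMatrix

theorem stmt13_general (ι R : Type) [Fintype ι] [DecidableEq ι]
    (A : Matrix (ι ⊕ R) (ι × Fin 4) ℝ)
    (hlam : ∀ (e : ι) (c : ι × Fin 4), A (Sum.inl e) c = if c.1 = e then 1 else 0)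
    (t : (ι ⊕ R) → ℝ)
    (ht : t ∈ (fun p => A.mulVec p) ''
        {p : ι × Fin 4 → ℝ | (∀ c, 0 ≤ p c) ∧ ∀ e : ι, ∑ k : Fin 4, p (e, k) = 1}) :
    t ∈ intrinsicInterior ℝ ((fun p => A.mulVec p) ''
          {p : ι × Fin 4 → ℝ | (∀ c, 0 ≤ p c) ∧ ∀ e : ι, ∑ k : Fin 4, p (e, k) = 1}) ↔
      t ∈ intrinsicInterior ℝ
          {s : (ι ⊕ R) → ℝ | ∃ y : ι × Fin 4 → ℝ, (∀ c, 0 ≤ y c) ∧ s = A.mulVec y} := by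
  set D := {p : ι × Fin 4 → ℝ | (∀ c, 0 ≤ p c) ∧ ∀ e : ι, ∑ k : Fin 4, p (e, k) = 1}
  obtain ⟨H, hH⟩ : ∃ H : AffineSubspace ℝ ((ι ⊕ R) → ℝ),
      (H : Set ((ι ⊕ R) → ℝ)) = {x | ∀ e, x (Sum.inl e) = 1} :=
    ⟨(affineSpan ℝ {1}).comap (LinearMap.funLeft ℝ ℝ Sum.inl).toAffineMap, by
      ext x; simp [funext_iff]⟩
  have hbary : A.mulVec (fun _ => 4⁻¹) ∈ (fun p => A.mulVec p) '' D :=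
    ⟨_, ⟨fun _ => by norm_num, fun _ => by norm_num⟩, rfl⟩
  rw [mulVec_image_simplices_eq_cone_inter A hlam, ← hH] at ht hbary ⊢
  constructor
  · intro h
    obtain ⟨_, ⟨⟨q, hq, rfl⟩, -⟩, htq⟩ :=
      exists_mem_openSegment_of_mem_intrinsicInterior h (subset_affineSpan ℝ _ hbary)
    obtain ⟨p, hp, rfl⟩ := (image_openSegment ℝ A.mulVecLin.toAffineMap _ q).ge htq
    exact A.mulVec_image_pos_subset_intrinsicInterior_cone
      ⟨p, openSegment_subset_setOf_pos (fun _ => by norm_num) hq hp, rfl⟩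
  · exact fun h => intrinsicInterior_inter_subset _ _ ⟨h, ht.2⟩

/-- With A the p₁ design matrix (with the λ_{ij} rows, and affinely independent
columns within each dyad block), P_A = {Ap : p ∈ Dₙ} the marginal polytope and
C_A = cone(A): for t ∈ P_A, t lies in the relative interior of P_A iff t lies in
the relative interior of C_A. -/
theorem stmt13 (ι R : Type) [Fintype ι] [Fintype R] [DecidableEq ι]
    (A : Matrix (ι ⊕ R) (ι × Fin 4) ℝ)
    (hlam : ∀ (e : ι) (c : ι × Fin 4), A (Sum.inl e) c = if c.1 = e then 1 else 0)
    (haff : ∀ e : ι,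
      AffineIndependent ℝ (fun k : Fin 4 => (fun r => A r (e, k) : (ι ⊕ R) → ℝ)))
    (t : (ι ⊕ R) → ℝ)
    (ht : t ∈ (fun p => A.mulVec p) ''
        {p : ι × Fin 4 → ℝ | (∀ c, 0 ≤ p c) ∧ ∀ e : ι, ∑ k : Fin 4, p (e, k) = 1}) :
    t ∈ intrinsicInterior ℝ ((fun p => A.mulVec p) ''
          {p : ι × Fin 4 → ℝ | (∀ c, 0 ≤ p c) ∧ ∀ e : ι, ∑ k : Fin 4, p (e, k) = 1}) ↔
      t ∈ intrinsicInterior ℝ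
          {s : (ι ⊕ R) → ℝ | ∃ y : ι × Fin 4 → ℝ, (∀ c, 0 ≤ y c) ∧ s = A.mulVec y} :=
  stmt13_general ι R A hlam t ht
end
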